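/- For all p ≥ 2 and all N, P > 0, x^Tμ(x) + ((p-1)/2)‖σ(x)‖² ≤ C₂(1+N²+P²) with C₂ = 1 + m + ((p-1)/4)(1 + 2m + c) + (p-1)/(2k), where x = (N,P), μ is the drift and ‖σ(x)‖² = N(1+N/k) + mNP/(1+N) + cP + mNP/(1+N). -/

import Mathlib

/-! The terms `-N³/k`, `-N·A` and `-cP²` (with `A = mNP/(1+N)` the Holling type II response) are
nonpositive and can be dropped. Everything left is at most quadratic: the saturation bound `A ≤ mP`
and AM-GM `x ≤ (1 + x²)/2` bound each term by a multiple of `1 + N² + P²`, and these multiples add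
up to at most `C₂`. -/

lemma mul_div_one_add_le {m N P : ℝ} (hm : 0 ≤ m) (hN : 0 ≤ N) (hP : 0 ≤ P) :
    m * N * P / (1 + N) ≤ m * P := by
  rw [div_le_iff₀ (by linarith)]
  nlinarith [mul_nonneg hm hP]

lemma le_one_add_sq_div_two (x : ℝ) : x ≤ (1 + x ^ 2) / 2 := by
  linarith [two_mul_le_add_sq x 1]

theorem rm_monotonicity_condition_p (m c k p N P : ℝ) (hm : 0 < m) (hc : 0 < c)
    (hk : 0 < k) (hp : 2 ≤ p) (hN : 0 < N) (hP : 0 < P) :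
    N * (N * (1 - N / k) - m * N * P / (1 + N)) +
        P * (-c * P + m * N * P / (1 + N)) +
        (p - 1) / 2 *
          (N * (1 + N / k) + m * N * P / (1 + N) + (c * P + m * N * P / (1 + N))) ≤
      (1 + m + (p - 1) / 4 * (1 + 2 * m + c) + (p - 1) / (2 * k)) *
        (1 + N ^ 2 + P ^ 2) := by
  obtain ⟨q, rfl⟩ : ∃ q, p = 2 * q + 1 := ⟨(p - 1) / 2, by ring⟩
  have hq : 0 ≤ q := by linarith
  set A := m * N * P / (1 + N)
  have hA : A ≤ m * P := mul_div_one_add_le hm.le hN.le hP.le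
  calc _ = N ^ 2 + P * A + q * (N + N ^ 2 / k + 2 * A + c * P)
          - (N ^ 3 / k + N * A + c * P ^ 2) := by ring
    _ ≤ N ^ 2 + P * A + q * (N + N ^ 2 / k + 2 * A + c * P) := sub_le_self _ (by positivity)
    _ ≤ N ^ 2 + P * (m * P) + q * ((1 + N ^ 2) / 2 + N ^ 2 / k
          + 2 * (m * ((1 + P ^ 2) / 2)) + c * ((1 + P ^ 2) / 2)) := by
        have hP_le := le_one_add_sq_div_two P
        gcongr _ + P * ?_ + q * (?_ + _ + 2 * ?_ + c * ?_)
        · exact le_one_add_sq_div_two N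
        · exact hA.trans (by gcongr)
    _ = _ - ((1 + P ^ 2) + m * (1 + N ^ 2) + q / 2 * P ^ 2 + q * m * N ^ 2
          + q * c / 2 * N ^ 2 + q / k * (1 + P ^ 2)) := by ring
    _ ≤ _ := sub_le_self _ (by positivity)
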